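/- Let K be a field, G a group, U a normal subgroup of G of prime index p, and g ∈ G an element with g ∉ U (so that the images of g generate G/U and g^p ∈ U). Let φ : U → GL(n, K) be a group homomorphism and suppose X ∈ GL(n, K) satisfies φ(y)·X = X·φ(g⁻¹yg) for all y ∈ U and X^p = φ(g^p). Then for every d ∈ K with d^p = 1 there exists a group homomorphism ψ : G → GL(n, K) such that ψ restricted to U equals φ and ψ(g) = d·X. -/
import Mathlib


open Matrix

/-- Extending a representation `φ` of a normal subgroup `U` of prime index `p` to the
whole group: if `X ∈ GL(n, K)` intertwines `φ` with its `g`-conjugate and `X^p = φ(g^p)`,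
then for every `p`-th root of unity `d` the assignment `g ↦ d·X` extends `φ` to a
representation of `G`. -/
theorem stmt_5 {K : Type*} [Field K] {G : Type*} [Group G] (n : ℕ)
    (U : Subgroup G) (hUnormal : U.Normal) (p : ℕ) (hp : p.Prime) (hidx : U.index = p)
    (g : G) (hg : g ∉ U) (hgp : g ^ p ∈ U)
    (φ : U →* GL (Fin n) K) (X : GL (Fin n) K)
    (hX : ∀ y : U, φ y * X = X * φ ⟨g⁻¹ * (y : G) * g, by
      simpa using hUnormal.conj_mem (y : G) y.2 g⁻¹⟩)
    (hXp : X ^ p = φ ⟨g ^ p, hgp⟩) :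
    ∀ d : K, d ^ p = 1 →
      ∃ ψ : G →* GL (Fin n) K,
        (∀ u : U, ψ (u : G) = φ u) ∧
        (ψ g : Matrix (Fin n) (Fin n) K) = d • (X : Matrix (Fin n) (Fin n) K) := by
  intro d hd
  have hp0 : 0 < p := hp.pos
  -- the scalar unit d
  have hd0 : d ≠ 0 := fun h => by simp [h, zero_pow hp0.ne'] at hd
  set dU : Kˣ := Units.mk0 d hd0 with hdU
  have hdUp : dU ^ p = 1 := by ext; push_cast [hdU]; exact hd
  set dm : GL (Fin n) K := Units.map (algebraMap K (Matrix (Fin n) (Fin n) K)).toMonoidHom dU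
    with hdm
  have hdmc : ∀ A : GL (Fin n) K, dm * A = A * dm := by
    intro A; ext; simp [hdm, Algebra.commutes]
  have hdmp : dm ^ p = 1 := by rw [hdm, ← map_pow, hdUp]; simp
  set Y : GL (Fin n) K := dm * X with hY
  -- intertwining for Y
  have hYint : ∀ (y : U) (h : g⁻¹ * (y : G) * g ∈ U), φ y * Y = Y * φ ⟨g⁻¹ * (y : G) * g, h⟩ := by
    intro y h
    rw [hY, ← mul_assoc, ← hdmc (φ y), mul_assoc, hX y, ← mul_assoc]
  -- membership of conjugates
  have hconj : ∀ (k : ℕ) (y : G), y ∈ U → (g ^ k)⁻¹ * y * g ^ k ∈ U := by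
    intro k y hy
    simpa using hUnormal.conj_mem y hy (g ^ k)⁻¹
  -- intertwining for powers of Y
  have hYk : ∀ (k : ℕ) (y : U) (h : (g ^ k)⁻¹ * (y : G) * g ^ k ∈ U),
      φ y * Y ^ k = Y ^ k * φ ⟨(g ^ k)⁻¹ * (y : G) * g ^ k, h⟩ := by
    intro k
    induction k with
    | zero => intro y h; simp
    | succ k ih =>
      intro y h
      have h1 : (g ^ k)⁻¹ * (y : G) * g ^ k ∈ U := hconj k y y.2
      have h2 : g⁻¹ * ((g ^ k)⁻¹ * (y : G) * g ^ k) * g ∈ U := by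
        simpa using hUnormal.conj_mem _ h1 g⁻¹
      calc φ y * Y ^ (k + 1) = (φ y * Y ^ k) * Y := by rw [pow_succ, mul_assoc]
        _ = Y ^ k * (φ ⟨(g ^ k)⁻¹ * (y : G) * g ^ k, h1⟩ * Y) := by rw [ih y h1, mul_assoc]
        _ = Y ^ k * (Y * φ ⟨g⁻¹ * ((g ^ k)⁻¹ * (y : G) * g ^ k) * g, h2⟩) := by
            rw [hYint ⟨(g ^ k)⁻¹ * (y : G) * g ^ k, h1⟩ h2]
        _ = Y ^ (k + 1) * φ ⟨(g ^ (k+1))⁻¹ * (y : G) * g ^ (k+1), h⟩ := by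
            rw [pow_succ, ← mul_assoc]
            congr 2
            ext
            simp only
            group
  have hYp : Y ^ p = φ ⟨g ^ p, hgp⟩ := by
    have hcomm : Commute dm X := hdmc X
    rw [hY, hcomm.mul_pow, hdmp, one_mul, hXp]
  -- the quotient
  have hcardQ : Nat.card (G ⧸ U) = p := by rw [← hidx]; rfl
  have : Finite (G ⧸ U) := Nat.finite_of_card_ne_zero (by rw [hcardQ]; exact hp0.ne')
  set π : G →* G ⧸ U := QuotientGroup.mk' U with hπ
  have hπg1 : π g ≠ 1 := by
    rw [hπ]; simpa [QuotientGroup.eq_one_iff] using hg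
  have hπgp : (π g) ^ p = 1 := by
    rw [← map_pow, hπ, QuotientGroup.mk'_apply, QuotientGroup.eq_one_iff]; exact hgp
  have hord : orderOf (π g) = p := by
    have h1 : orderOf (π g) ∣ p := orderOf_dvd_of_pow_eq_one hπgp
    rcases (Nat.Prime.eq_one_or_self_of_dvd hp _ h1) with h | h
    · exact absurd (orderOf_eq_one_iff.mp h) hπg1
    · exact h
  have htop : Subgroup.zpowers (π g) = ⊤ := by
    apply Subgroup.eq_top_of_card_eq
    rw [Nat.card_zpowers, hord, hcardQ]
  -- the exponent function κ
  have hexists : ∀ x : G, ∃ k : ℕ, k < p ∧ x * (g ^ (k : ℤ))⁻¹ ∈ U := by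
    intro x
    have : π x ∈ Subgroup.zpowers (π g) := htop ▸ Subgroup.mem_top _
    obtain ⟨m, hm⟩ := this
    refine ⟨(m % (p : ℤ)).toNat, ?_, ?_⟩
    · have h1 : m % (p : ℤ) < p := Int.emod_lt_of_pos m (by exact_mod_cast hp0)
      omega
    · have h2 : ((((m % (p : ℤ)).toNat : ℕ) : ℤ)) = m % (p : ℤ) := by
        have := Int.emod_nonneg m (by exact_mod_cast hp0.ne' : (p : ℤ) ≠ 0)
        omega
      have h3 : (π g) ^ (((m % (p : ℤ)).toNat : ℕ) : ℤ) = π x := by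
        rw [h2, ← hord, zpow_mod_orderOf]; exact hm
      have : π (x * (g ^ (((m % (p : ℤ)).toNat : ℕ) : ℤ))⁻¹) = 1 := by
        rw [_root_.map_mul, _root_.map_inv, map_zpow, h3]
        group
      rwa [hπ, QuotientGroup.mk'_apply, QuotientGroup.eq_one_iff] at this
  choose κ hκlt hκmem using hexists
  -- uniqueness
  have huniq : ∀ (x : G) (k : ℕ), k < p → x * (g ^ (k : ℤ))⁻¹ ∈ U → κ x = k := by
    intro x k hk hkmem
    have key : ∀ (j : ℕ), x * (g ^ (j : ℤ))⁻¹ ∈ U → (π g) ^ j = π x := by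
      intro j hj
      have : π (x * (g ^ (j : ℤ))⁻¹) = 1 := by
        rw [hπ, QuotientGroup.mk'_apply, QuotientGroup.eq_one_iff]; exact hj
      rw [_root_.map_mul, _root_.map_inv, map_zpow] at this
      have := mul_inv_eq_one.mp this
      rw [this]; exact_mod_cast rfl
    have h1 := key _ (hκmem x)
    have h2 := key _ hkmem
    have : (π g) ^ (κ x) = (π g) ^ k := by rw [h1, h2]
    exact pow_injOn_Iio_orderOf (by simpa [hord] using hκlt x) (by simpa [hord] using hk) this
  -- the extension as a function
  set ψf : G → GL (Fin n) K := fun x => φ ⟨x * (g ^ ((κ x : ℕ) : ℤ))⁻¹, hκmem x⟩ * Y ^ (κ x)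
    with hψf
  have hψeq : ∀ (x : G) (k : ℕ), k < p → ∀ h : x * (g ^ (k : ℤ))⁻¹ ∈ U,
      ψf x = φ ⟨x * (g ^ (k : ℤ))⁻¹, h⟩ * Y ^ k := by
    intro x k hk h
    have e := huniq x k hk h
    subst e
    rfl
  -- multiplicativity
  have hmul : ∀ x y : G, ψf (x * y) = ψf x * ψf y := by
    intro x y
    set k1 := κ x with hk1
    set k2 := κ y with hk2
    -- conjugated element
    have hbmem : (g ^ k1)⁻¹ * (y * (g ^ ((k2 : ℕ) : ℤ))⁻¹) * g ^ k1 ∈ U :=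
      hconj k1 _ (hκmem y)
    have hbmem' : g ^ k1 * (y * (g ^ ((k2 : ℕ) : ℤ))⁻¹) * (g ^ k1)⁻¹ ∈ U := by
      simpa using hUnormal.conj_mem _ (hκmem y) (g ^ k1)
    -- step 1: move φ-part of ψf y across Y^k1
    have step1 : Y ^ k1 * φ ⟨y * (g ^ ((k2 : ℕ) : ℤ))⁻¹, hκmem y⟩
        = φ ⟨g ^ k1 * (y * (g ^ ((k2 : ℕ) : ℤ))⁻¹) * (g ^ k1)⁻¹, hbmem'⟩ * Y ^ k1 := by
      have := hYk k1 ⟨g ^ k1 * (y * (g ^ ((k2 : ℕ) : ℤ))⁻¹) * (g ^ k1)⁻¹, hbmem'⟩ (by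
        simpa using hconj k1 _ hbmem')
      rw [this]
      congr 2
      ext
      simp only
      group
    -- combine
    have hsum : ψf x * ψf y
        = φ (⟨x * (g ^ ((k1 : ℕ) : ℤ))⁻¹, hκmem x⟩ *
            ⟨g ^ k1 * (y * (g ^ ((k2 : ℕ) : ℤ))⁻¹) * (g ^ k1)⁻¹, hbmem'⟩) * Y ^ (k1 + k2) := by
      rw [hψf]
      simp only
      rw [mul_assoc, ← mul_assoc (Y ^ k1), step1, _root_.map_mul, pow_add]
      simp only [← hk1, ← hk2, mul_assoc]
    -- the product element
    have hprodmem : (x * y) * (g ^ (((k1 + k2 : ℕ)) : ℤ))⁻¹ ∈ U := by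
      have : (x * y) * (g ^ (((k1 + k2 : ℕ)) : ℤ))⁻¹
          = (x * (g ^ ((k1 : ℕ) : ℤ))⁻¹) * (g ^ k1 * (y * (g ^ ((k2 : ℕ) : ℤ))⁻¹) * (g ^ k1)⁻¹) := by
        push_cast
        group
      rw [this]
      exact U.mul_mem (hκmem x) hbmem'
    have hsum2 : ψf x * ψf y = φ ⟨(x * y) * (g ^ (((k1 + k2 : ℕ)) : ℤ))⁻¹, hprodmem⟩
        * Y ^ (k1 + k2) := by
      rw [hsum]
      congr 2
      ext
      push_cast
      group
    -- decompose k1 + k2 = p * q + r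
    set r := (k1 + k2) % p with hr
    set q := (k1 + k2) / p with hq
    have hdecomp : k1 + k2 = p * q + r := (Nat.div_add_mod (k1+k2) p).symm
    have hrlt : r < p := Nat.mod_lt _ hp0
    have hgpq : g ^ (p * q) ∈ U := by
      rw [pow_mul]; exact U.pow_mem hgp q
    have hYpq : Y ^ (p * q) = φ ⟨g ^ (p * q), hgpq⟩ := by
      rw [pow_mul, hYp, ← _root_.map_pow]
      congr 1
      ext
      simp [pow_mul, SubmonoidClass.coe_pow]
    have hYsplit : Y ^ (k1 + k2) = φ ⟨g ^ (p * q), hgpq⟩ * Y ^ r := by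
      rw [hdecomp, pow_add, hYpq]
    -- final membership
    have hxymem : (x * y) * (g ^ ((r : ℕ) : ℤ))⁻¹ ∈ U := by
      have heq : (x * y) * (g ^ ((r : ℕ) : ℤ))⁻¹
          = ((x * y) * (g ^ (((k1 + k2 : ℕ)) : ℤ))⁻¹) * g ^ (p * q) := by
        rw [hdecomp]
        push_cast
        group
      rw [heq]
      exact U.mul_mem hprodmem hgpq
    rw [hψeq (x * y) r hrlt hxymem, hsum2, hYsplit, ← mul_assoc, ← _root_.map_mul]
    congr 2
    ext
    simp only [Subgroup.coe_mul]
    rw [hdecomp]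
    push_cast
    group
  refine ⟨MonoidHom.mk' ψf hmul, ?_, ?_⟩
  · intro u
    have h0 : (u : G) * (g ^ ((0 : ℕ) : ℤ))⁻¹ ∈ U := by simpa using u.2
    rw [show ((MonoidHom.mk' ψf hmul) (u : G)) = ψf (u : G) from rfl,
      hψeq (u : G) 0 hp0 h0]
    have : (⟨(u : G) * (g ^ ((0 : ℕ) : ℤ))⁻¹, h0⟩ : U) = u := by ext; simp
    rw [this]
    simp
  · have h1 : g * (g ^ ((1 : ℕ) : ℤ))⁻¹ ∈ U := by simpa using U.one_mem
    have : ψf g = Y := by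
      rw [hψeq g 1 hp.one_lt h1]
      have : (⟨g * (g ^ ((1 : ℕ) : ℤ))⁻¹, h1⟩ : U) = 1 := by ext; simp
      rw [this]
      simp
    show (ψf g : Matrix (Fin n) (Fin n) K) = _
    rw [this, hY]
    show ((dm : Matrix (Fin n) (Fin n) K) * X) = _
    simp [hdm, Algebra.algebraMap_eq_smul_one, smul_mul_assoc]
    rfl
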